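/- For every nonzero x ∈ ℂ^{n+1}, there is no y ∈ ℂ^{n+1} with m(y) = −m(x); that is, −(x∧Jx) cannot be written in the form y∧Jy for any y. -/

import Mathlib

/-!
Since `g(x, z) = Re h(x, z)` and `g(Jx, z) = -Im h(x, z)`, the map `x ∧ Jx` is
`z ↦ i · conj (h(x, z)) · x`, whose image is the complex line through `x`. If `y ∧ Jy = -(x ∧ Jx)`
with `x ≠ 0`, comparing images forces `y = c x`, and then `y ∧ Jy = |c|² (x ∧ Jx)`, so that
`|c|² = -1`.
-/

open Complex

/-- The standard hermitian form of signature `(n,1)` on `ℂ^{n+1}`. -/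
noncomputable def hForm (n : ℕ) (x y : Fin (n+1) → ℂ) : ℂ :=
  (∑ i : Fin n, x i.castSucc * (starRingEnd ℂ) (y i.castSucc))
    - x (Fin.last n) * (starRingEnd ℂ) (y (Fin.last n))

/-- The real part `g = Re h`. -/
noncomputable def gForm (n : ℕ) (x y : Fin (n+1) → ℂ) : ℝ := (hForm n x y).re

/-- `m(x) = x ∧ Jx`, i.e. `(x ∧ Jx) z = g(x,z)·Jx − g(Jx,z)·x`. -/
noncomputable def mFun (n : ℕ) (x z : Fin (n+1) → ℂ) : Fin (n+1) → ℂ :=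
  gForm n x z • (Complex.I • x) - gForm n (Complex.I • x) z • x

open ComplexConjugate

lemma hForm_smul_left (n : ℕ) (c : ℂ) (x z : Fin (n+1) → ℂ) :
    hForm n (c • x) z = c * hForm n x z := by
  simp [hForm, Finset.mul_sum, mul_sub, mul_assoc]

lemma mFun_eq_smul (n : ℕ) (x z : Fin (n+1) → ℂ) :
    mFun n x z = (I * conj (hForm n x z)) • x := by
  ext j
  simp only [mFun, gForm, hForm_smul_left, mul_re, I_re, zero_mul, I_im, one_mul, zero_sub,
    neg_smul, Pi.sub_apply, Pi.smul_apply, smul_eq_mul, real_smul, Pi.neg_apply, sub_neg_eq_add,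
    Complex.ext_iff, add_re, ofReal_re, mul_neg, ofReal_im, mul_im, zero_add, sub_zero, conj_re,
    conj_im, neg_zero, add_im, add_zero]
  constructor <;> ring

lemma mFun_smul (n : ℕ) (c : ℂ) (x z : Fin (n+1) → ℂ) :
    mFun n (c • x) z = (normSq c : ℂ) • mFun n x z := by
  rw [mFun_eq_smul, mFun_eq_smul, hForm_smul_left, smul_smul, smul_smul, map_mul,
    normSq_eq_conj_mul_self]
  ring_nf

/-- Flipping the sign of the last coordinate turns `h` into the standard positive definite form. -/
lemma hForm_update_last_neg (n : ℕ) (x : Fin (n+1) → ℂ) :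
    hForm n x (Function.update x (Fin.last n) (-x (Fin.last n))) = ∑ i, (normSq (x i) : ℂ) := by
  rw [Fin.sum_univ_castSucc]
  simp [hForm, mul_conj]

lemma exists_hForm_ne_zero {n : ℕ} {x : Fin (n+1) → ℂ} (hx : x ≠ 0) :
    ∃ z, hForm n x z ≠ 0 := by
  refine ⟨Function.update x (Fin.last n) (-x (Fin.last n)), ?_⟩
  rw [hForm_update_last_neg]
  obtain ⟨j, hj⟩ := Function.ne_iff.mp hx
  have hpos : 0 < ∑ i, normSq (x i) :=
    Finset.sum_pos' (fun i _ ↦ normSq_nonneg _) ⟨j, Finset.mem_univ j, normSq_pos.mpr hj⟩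
  exact_mod_cast hpos.ne'

lemma exists_mFun_ne_zero {n : ℕ} {x : Fin (n+1) → ℂ} (hx : x ≠ 0) :
    ∃ z, mFun n x z ≠ 0 := by
  obtain ⟨z, hz⟩ := exists_hForm_ne_zero hx
  refine ⟨z, ?_⟩
  rw [mFun_eq_smul, smul_ne_zero_iff]
  exact ⟨mul_ne_zero I_ne_zero ((map_ne_zero _).mpr hz), hx⟩

lemma exists_eq_smul_of_mFun_eq {n : ℕ} {y z v : Fin (n+1) → ℂ}
    (hv : v ≠ 0) (h : mFun n y z = v) : ∃ c : ℂ, y = c • v := by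
  rw [mFun_eq_smul] at h
  set u := I * conj (hForm n y z)
  have hu : u ≠ 0 := fun hu ↦ hv (by rw [← h, hu, zero_smul])
  exact ⟨u⁻¹, by rw [← h, smul_smul, inv_mul_cancel₀ hu, one_smul]⟩

theorem neg_mFun_not_mFun_general (n : ℕ) (x : Fin (n+1) → ℂ)
    (hx : x ≠ 0) :
    ¬ ∃ y : Fin (n+1) → ℂ, ∀ z : Fin (n+1) → ℂ, mFun n y z = - mFun n x z := by
  rintro ⟨y, hy⟩
  obtain ⟨z, hz⟩ := exists_mFun_ne_zero hx
  obtain ⟨c, rfl⟩ : ∃ c : ℂ, y = c • x := by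
    obtain ⟨d, rfl⟩ := exists_eq_smul_of_mFun_eq (neg_ne_zero.mpr hz) (hy z)
    exact ⟨-(d * (I * conj (hForm n x z))), by rw [mFun_eq_smul, smul_neg, smul_smul, neg_smul]⟩
  have hc : ((normSq c + 1 : ℝ) : ℂ) • mFun n x z = 0 := by
    rw [ofReal_add, ofReal_one, add_smul, one_smul, ← mFun_smul, hy, neg_add_cancel]
  rcases smul_eq_zero.mp hc with h | h
  · linarith [normSq_nonneg c, ofReal_eq_zero.mp h]
  · exact hz h

/-- for nonzero `x`, the endomorphism `−(x ∧ Jx)` cannot be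
written in the form `y ∧ Jy` for any `y`. -/
theorem neg_mFun_not_mFun (n : ℕ) (hn : 1 ≤ n) (x : Fin (n+1) → ℂ)
    (hx : x ≠ 0) :
    ¬ ∃ y : Fin (n+1) → ℂ, ∀ z : Fin (n+1) → ℂ, mFun n y z = - mFun n x z :=
  neg_mFun_not_mFun_general n x hx
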